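/- arXiv:2110.09521 — 2 statements merged into one kernel-verified Lean document; each statement's English description precedes it below -/
import Mathlib

section
/- Let X, Y be Bernoulli random variables with marginals p_x, p_y ∈ (0,1) and joint distribution such that all four probabilities p(i,j) are positive, and let ε = P(X=1,Y=1) − p_x p_y. If |ε| ≤ (1/2)·min over i,j of p(i)p(j), then |I(X,Y) − ε²/(2(p_x − p_x²)(p_y − p_y²))| ≤ K·|ε|³ for some constant K depending only on p_x and p_y (explicitly one may take K = 16/(min_{i,j} p(i)p(j))²). -/
/-!
Mutual information is the relative entropy `∑ p log (p / a)` of the joint law `p` from the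
product `a(i,j) = p_X(i) p_Y(j)` of its marginals. Taylor expansion of `(1 + x) log (1 + x)` at
`0` gives `p log (p / a) = (p - a) + (p - a)² / (2a) + O(|p - a|³ / a²)`; the linear terms cancel
because `p` and `a` have the same total mass. For a `2 × 2` table every deviation
`p(i,j) - a(i,j)` equals `±ε`, so the quadratic terms add up to
`ε² / (2 p_x (1 - p_x) p_y (1 - p_y))` and the cubic ones to at most `16 |ε|³ / M²`.
-/

open Real Finset

lemma abs_log_one_add_sub_add_le {x : ℝ} (hx : |x| ≤ 1 / 2) :
    |log (1 + x) - x + x ^ 2 / 2| ≤ 2 * |x| ^ 3 := by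
  have h := abs_log_sub_add_sum_range_le (x := -x) (by rw [abs_neg]; linarith) 2
  have hpoly : ∑ i ∈ range 2, (-x) ^ (i + 1) / (i + 1 : ℝ) = -x + x ^ 2 / 2 := by
    norm_num [sum_range_succ]
  rw [hpoly, sub_neg_eq_add, abs_neg] at h
  calc |log (1 + x) - x + x ^ 2 / 2| = |-x + x ^ 2 / 2 + log (1 + x)| := by ring_nf
    _ ≤ |x| ^ 3 / (1 - |x|) := h
    _ ≤ 2 * |x| ^ 3 := by
      rw [div_le_iff₀ (by linarith)]
      nlinarith [pow_nonneg (abs_nonneg x) 3]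

lemma abs_one_add_mul_log_one_add_sub_le {x : ℝ} (hx : |x| ≤ 1 / 2) :
    |(1 + x) * log (1 + x) - x - x ^ 2 / 2| ≤ 4 * |x| ^ 3 := by
  have hlog := abs_log_one_add_sub_add_le hx
  have h1x : |1 + x| ≤ 3 / 2 := (abs_add_le 1 x).trans (by rw [abs_one]; linarith)
  calc |(1 + x) * log (1 + x) - x - x ^ 2 / 2|
      = |(1 + x) * (log (1 + x) - x + x ^ 2 / 2) - x ^ 3 / 2| := by ring_nf
    _ ≤ |1 + x| * |log (1 + x) - x + x ^ 2 / 2| + |x| ^ 3 / 2 := by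
      rw [← abs_mul]
      refine (abs_sub _ _).trans (le_of_eq ?_)
      rw [abs_div, abs_pow]; norm_num
    _ ≤ 3 / 2 * (2 * |x| ^ 3) + |x| ^ 3 / 2 := by gcongr
    _ ≤ 4 * |x| ^ 3 := by linarith [pow_nonneg (abs_nonneg x) 3]

lemma abs_mul_log_div_sub_le {p a : ℝ} (ha : 0 < a) (hpa : |p - a| ≤ a / 2) :
    |p * log (p / a) - (p - a) - (p - a) ^ 2 / (2 * a)| ≤ 4 * |p - a| ^ 3 / a ^ 2 := by
  have hx : |(p - a) / a| ≤ 1 / 2 := by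
    rw [abs_div, abs_of_pos ha, div_le_iff₀ ha]; linarith
  have key : p * log (p / a) - (p - a) - (p - a) ^ 2 / (2 * a)
      = a * ((1 + (p - a) / a) * log (1 + (p - a) / a) - (p - a) / a - ((p - a) / a) ^ 2 / 2) := by
    have : 1 + (p - a) / a = p / a := by field_simp; ring
    rw [this]; field_simp
  rw [key, abs_mul, abs_of_pos ha]
  calc _ ≤ a * (4 * |(p - a) / a| ^ 3) := by
        gcongr; exact abs_one_add_mul_log_one_add_sub_le hx
    _ = 4 * |p - a| ^ 3 / a ^ 2 := by
        rw [abs_div, abs_of_pos ha]; field_simp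

lemma abs_sum_mul_log_div_sub_le {ι : Type*} (s : Finset ι) {p a : ι → ℝ}
    (ha : ∀ i ∈ s, 0 < a i) (hpa : ∀ i ∈ s, |p i - a i| ≤ a i / 2)
    (hmass : ∑ i ∈ s, p i = ∑ i ∈ s, a i) :
    |∑ i ∈ s, p i * log (p i / a i) - ∑ i ∈ s, (p i - a i) ^ 2 / (2 * a i)|
      ≤ 4 * ∑ i ∈ s, |p i - a i| ^ 3 / a i ^ 2 := by
  have hlin : ∑ i ∈ s, (p i - a i) = 0 := by rw [sum_sub_distrib, hmass, sub_self]
  calc _ = |∑ i ∈ s, (p i * log (p i / a i) - (p i - a i) - (p i - a i) ^ 2 / (2 * a i))| :=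
        by rw [sum_sub_distrib, sum_sub_distrib, hlin, sub_zero]
    _ ≤ ∑ i ∈ s, |p i * log (p i / a i) - (p i - a i) - (p i - a i) ^ 2 / (2 * a i)| :=
        abs_sum_le_sum_abs _ _
    _ ≤ ∑ i ∈ s, 4 * |p i - a i| ^ 3 / a i ^ 2 :=
        sum_le_sum fun i hi => abs_mul_log_div_sub_le (ha i hi) (hpa i hi)
    _ = 4 * ∑ i ∈ s, |p i - a i| ^ 3 / a i ^ 2 := by rw [mul_sum]; simp only [mul_div_assoc]

lemma abs_sub_rowSum_mul_colSum (p : Fin 2 → Fin 2 → ℝ) (hsum : ∑ i, ∑ j, p i j = 1)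
    (i j : Fin 2) :
    |p i j - (∑ j', p i j') * (∑ i', p i' j)|
      = |p 1 1 - (∑ j', p 1 j') * (∑ i', p i' 1)| := by
  revert i j
  simp only [Fin.forall_fin_two, Fin.sum_univ_two] at hsum ⊢
  refine ⟨⟨?_, ?_⟩, ?_, trivial⟩
  · congr 1; linear_combination (p 1 1 - p 0 0) * hsum
  · rw [← abs_neg]; congr 1; linear_combination (p 1 1 + p 0 1) * hsum
  · rw [← abs_neg]; congr 1; linear_combination (p 1 1 + p 1 0) * hsum

lemma sum_sum_div_two_mul_mul {q r : Fin 2 → ℝ} (hq : ∀ i, q i ≠ 0) (hr : ∀ j, r j ≠ 0)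
    (hq1 : ∑ i, q i = 1) (hr1 : ∑ j, r j = 1) (c : ℝ) :
    ∑ i, ∑ j, c / (2 * (q i * r j)) = c / (2 * (q 1 - q 1 ^ 2) * (r 1 - r 1 ^ 2)) := by
  rw [Fin.sum_univ_two] at hq1 hr1
  have hq0 : q 0 = 1 - q 1 := eq_sub_of_add_eq hq1
  have hr0 : r 0 = 1 - r 1 := eq_sub_of_add_eq hr1
  have := hq 1; have := hr 1; have := hq0 ▸ hq 0; have := hr0 ▸ hr 0
  simp only [Fin.sum_univ_two, hq0, hr0]
  field_simp
  ring

theorem mutualInfo_eq_half_sq_corr_general (p : Fin 2 → Fin 2 → ℝ)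
    (hpos : ∀ i j, 0 < p i j) (hsum : ∑ i, ∑ j, p i j = 1)
    (px py : ℝ) (hpx : px = ∑ j, p 1 j) (hpy : py = ∑ i, p i 1)
    (ε : ℝ) (hε : ε = p 1 1 - px * py)
    (M : ℝ)
    (hM : M = min (min ((∑ j, p 0 j) * (∑ i, p i 0)) ((∑ j, p 0 j) * py))
      (min (px * (∑ i, p i 0)) (px * py)))
    (hsmall : |ε| ≤ M / 2) :
    |(∑ i, ∑ j, p i j * Real.log (p i j / ((∑ j', p i j') * (∑ i', p i' j)))) -
        ε ^ 2 / (2 * (px - px ^ 2) * (py - py ^ 2))| ≤ (16 / M ^ 2) * |ε| ^ 3 := by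
  subst hpx hpy
  set q : Fin 2 → ℝ := fun i => ∑ j, p i j
  set r : Fin 2 → ℝ := fun j => ∑ i, p i j
  have hq : ∀ i, 0 < q i := fun i => sum_pos (fun j _ => hpos i j) univ_nonempty
  have hr : ∀ j, 0 < r j := fun j => sum_pos (fun i _ => hpos i j) univ_nonempty
  have hq1 : ∑ i, q i = 1 := hsum
  have hr1 : ∑ j, r j = 1 := by rw [← hsum]; exact sum_comm
  have hdev : ∀ i j, |p i j - q i * r j| = |ε| :=
    fun i j => hε ▸ abs_sub_rowSum_mul_colSum p hsum i j
  have hMle : ∀ i j, M ≤ q i * r j := by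
    intro i j; fin_cases i <;> fin_cases j <;> simp [hM, q, r]
  have hMpos : 0 < M := by
    simp only [hM, lt_min_iff]
    exact ⟨⟨mul_pos (hq 0) (hr 0), mul_pos (hq 0) (hr 1)⟩,
      mul_pos (hq 1) (hr 0), mul_pos (hq 1) (hr 1)⟩
  have hkl := abs_sum_mul_log_div_sub_le (univ : Finset (Fin 2 × Fin 2))
    (p := fun x => p x.1 x.2) (a := fun x => q x.1 * r x.2)
    (fun x _ => mul_pos (hq x.1) (hr x.2))
    (fun x _ => by rw [hdev]; exact hsmall.trans (by linarith [hMle x.1 x.2]))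
    (by simp only [Fintype.sum_prod_type, ← sum_mul_sum, hq1, hr1, mul_one]; exact hsum)
  simp only [Fintype.sum_prod_type, ← sq_abs (p _ _ - _), hdev, sq_abs,
    sum_sum_div_two_mul_mul (fun i => (hq i).ne') (fun j => (hr j).ne') hq1 hr1] at hkl
  calc _ ≤ 4 * ∑ i, ∑ j, |ε| ^ 3 / (q i * r j) ^ 2 := hkl
    _ ≤ 4 * ∑ _i : Fin 2, ∑ _j : Fin 2, |ε| ^ 3 / M ^ 2 := by
      gcongr with i _ j _
      exact hMle i j
    _ = 16 / M ^ 2 * |ε| ^ 3 := by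
      simp only [sum_const, card_univ, Fintype.card_fin, nsmul_eq_mul]; ring

/-- Theorem 1 of the paper in precise form. If the covariance
ε = p(1,1) − p_x p_y is small (|ε| ≤ (1/2) min_{i,j} p_X(i) p_Y(j)), then the mutual
information equals ε²/(2(p_x−p_x²)(p_y−p_y²)) up to an error of at most K|ε|³ with
K = 16 / (min_{i,j} p_X(i) p_Y(j))². -/
theorem mutualInfo_eq_half_sq_corr (p : Fin 2 → Fin 2 → ℝ)
    (hpos : ∀ i j, 0 < p i j) (hsum : ∑ i, ∑ j, p i j = 1)
    (px py : ℝ) (hpx : px = ∑ j, p 1 j) (hpy : py = ∑ i, p i 1)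
    (hpx0 : 0 < px) (hpx1 : px < 1) (hpy0 : 0 < py) (hpy1 : py < 1)
    (ε : ℝ) (hε : ε = p 1 1 - px * py)
    (M : ℝ)
    (hM : M = min (min ((∑ j, p 0 j) * (∑ i, p i 0)) ((∑ j, p 0 j) * py))
      (min (px * (∑ i, p i 0)) (px * py)))
    (hsmall : |ε| ≤ M / 2) :
    |(∑ i, ∑ j, p i j * Real.log (p i j / ((∑ j', p i j') * (∑ i', p i' j)))) -
        ε ^ 2 / (2 * (px - px ^ 2) * (py - py ^ 2))| ≤ (16 / M ^ 2) * |ε| ^ 3 :=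
  mutualInfo_eq_half_sq_corr_general p hpos hsum px py hpx hpy ε hε M hM hsmall
end

section
/- Combining the two previous facts: if Y → W → X is a Markov chain of Bernoulli variables with all marginals in (0,1), then C(X,Y) = C(X,W) · C(W,Y) · sqrt((p_w − p_w²)²/((p_w − p_w²)²)) = δp_{W→X}δp_{Y→W}·sqrt((p_y−p_y²)/(p_x−p_x²)); in particular |C(X,Y)| ≤ |δp_{W→X}|·|δp_{Y→W}|·sqrt((p_y−p_y²)/(p_x−p_x²)), so if both direct increments satisfy |δp| ≤ δ then the indirect correlation satisfies |C(X,Y)| ≤ δ²·sqrt((p_y−p_y²)/(p_x−p_x²)). -/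
/-!
For any pair of Bernoulli variables the 2×2 table gives `Cov(W,Y) = δp_{Y→W} · Var Y`.
Conditional independence of `X` and `Y` given `W` lets `P(X = 1 ∧ Y = 1)` and `P(X = 1)` be
computed by conditioning on `W`, which yields `Cov(X,Y) = δp_{W→X} · Cov(W,Y)`. Hence
`Cov(X,Y) = δp_{W→X} δp_{Y→W} Var Y`, and dividing by `√(Var X · Var Y)` with
`Var = p - p²` gives the correlation; the bound is then immediate.
-/

open MeasureTheory ProbabilityTheory

-- No condition on `x`: for `x ≤ 0` both sides vanish, as `√x = 0` and `y / 0 = 0`.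
lemma div_sqrt_mul_sqrt_eq_sqrt_div {x y : ℝ} (hy : 0 ≤ y) :
    y / (Real.sqrt x * Real.sqrt y) = Real.sqrt (y / x) := by
  rw [Real.sqrt_div hy, div_mul_eq_div_div_swap, Real.div_sqrt]

lemma eq_indicator_of_zero_or_one {Ω : Type*} {X : Ω → ℝ}
    (h01 : ∀ ω, X ω = 0 ∨ X ω = 1) :
    X = {ω | X ω = 1}.indicator 1 := by
  ext ω
  rcases h01 ω with h | h <;> simp [h]

section ZeroOne

variable {Ω : Type*} [MeasurableSpace Ω] {μ : Measure Ω} {X Y W : Ω → ℝ}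

/-- The paper's `δp_{A→B} = P(B = 1 | A = 1) - P(B = 1 | A = 0)`. -/
noncomputable def condProbIncrement (μ : Measure Ω) (A B : Ω → ℝ) : ℝ :=
  μ.real {ω | B ω = 1 ∧ A ω = 1} / μ.real {ω | A ω = 1} -
    μ.real {ω | B ω = 1 ∧ A ω = 0} / μ.real {ω | A ω = 0}

lemma integral_eq_measureReal_of_zero_or_one (hX : Measurable X)
    (h01 : ∀ ω, X ω = 0 ∨ X ω = 1) : ∫ ω, X ω ∂μ = μ.real {ω | X ω = 1} := by
  have hs : MeasurableSet {ω | X ω = 1} := hX (measurableSet_singleton 1)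
  have h := integral_indicator_one (μ := μ) hs
  rwa [← eq_indicator_of_zero_or_one h01] at h

lemma memLp_of_zero_or_one [IsFiniteMeasure μ] (hX : Measurable X)
    (h01 : ∀ ω, X ω = 0 ∨ X ω = 1) (p : ENNReal) : MemLp X p μ :=
  MemLp.of_bound hX.aestronglyMeasurable 1 <| ae_of_all _ fun ω => by
    rcases h01 ω with h | h <;> simp [h]

lemma covariance_of_zero_or_one [IsProbabilityMeasure μ] (hX : Measurable X) (hY : Measurable Y)
    (hX01 : ∀ ω, X ω = 0 ∨ X ω = 1) (hY01 : ∀ ω, Y ω = 0 ∨ Y ω = 1) :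
    cov[X, Y; μ] =
      μ.real {ω | X ω = 1 ∧ Y ω = 1} - μ.real {ω | X ω = 1} * μ.real {ω | Y ω = 1} := by
  have hXY01 : ∀ ω, (X * Y) ω = 0 ∨ (X * Y) ω = 1 := fun ω => by
    rcases hX01 ω with h | h <;> rcases hY01 ω with h' | h' <;> simp [h, h']
  have hXY : {ω | (X * Y) ω = 1} = {ω | X ω = 1 ∧ Y ω = 1} := by
    ext ω
    rcases hX01 ω with h | h <;> rcases hY01 ω with h' | h' <;> simp [h, h']
  rw [covariance_eq_sub (memLp_of_zero_or_one hX hX01 2) (memLp_of_zero_or_one hY hY01 2),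
    integral_eq_measureReal_of_zero_or_one (hX.mul hY) hXY01, hXY,
    integral_eq_measureReal_of_zero_or_one hX hX01, integral_eq_measureReal_of_zero_or_one hY hY01]

lemma variance_of_zero_or_one [IsProbabilityMeasure μ] (hX : Measurable X)
    (hX01 : ∀ ω, X ω = 0 ∨ X ω = 1) :
    Var[X; μ] = μ.real {ω | X ω = 1} - μ.real {ω | X ω = 1} ^ 2 := by
  rw [← covariance_self hX.aemeasurable, covariance_of_zero_or_one hX hX hX01 hX01, sq]
  simp only [and_self]

lemma measureReal_eq_add_of_zero_or_one [IsFiniteMeasure μ] (hW : Measurable W)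
    (hW01 : ∀ ω, W ω = 0 ∨ W ω = 1) (s : Set Ω) :
    μ.real s = μ.real (s ∩ {ω | W ω = 0}) + μ.real (s ∩ {ω | W ω = 1}) := by
  have hsdiff : s \ {ω | W ω = 1} = s ∩ {ω | W ω = 0} := by
    ext ω
    rcases hW01 ω with h | h <;> simp [h]
  have hW1 : MeasurableSet {ω | W ω = 1} := hW (measurableSet_singleton 1)
  rw [← measureReal_inter_add_sdiff hW1, hsdiff, add_comm]

lemma measureReal_zero_add_measureReal_one [IsProbabilityMeasure μ] (hW : Measurable W)
    (hW01 : ∀ ω, W ω = 0 ∨ W ω = 1) :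
    μ.real {ω | W ω = 0} + μ.real {ω | W ω = 1} = 1 := by
  simpa using (measureReal_eq_add_of_zero_or_one (μ := μ) hW hW01 Set.univ).symm

lemma covariance_eq_condProbIncrement_mul_variance [IsProbabilityMeasure μ] (hW : Measurable W)
    (hY : Measurable Y) (hW01 : ∀ ω, W ω = 0 ∨ W ω = 1)
    (hY01 : ∀ ω, Y ω = 0 ∨ Y ω = 1)
    (hY0 : μ.real {ω | Y ω = 0} ≠ 0) (hY1 : μ.real {ω | Y ω = 1} ≠ 0) :
    cov[W, Y; μ] = condProbIncrement μ Y W * Var[Y; μ] := by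
  have hW1 : μ.real {ω | W ω = 1} =
      μ.real {ω | W ω = 1 ∧ Y ω = 0} + μ.real {ω | W ω = 1 ∧ Y ω = 1} :=
    measureReal_eq_add_of_zero_or_one hY hY01 _
  have hY0' : μ.real {ω | Y ω = 0} = 1 - μ.real {ω | Y ω = 1} :=
    eq_sub_of_add_eq (measureReal_zero_add_measureReal_one hY hY01)
  rw [covariance_of_zero_or_one hW hY hW01 hY01, variance_of_zero_or_one hY hY01,
    condProbIncrement, hW1, hY0']
  rw [hY0'] at hY0
  field_simp
  ring

lemma covariance_eq_condProbIncrement_mul_covariance_of_markov [IsProbabilityMeasure μ]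
    (hX : Measurable X) (hW : Measurable W) (hY : Measurable Y)
    (hX01 : ∀ ω, X ω = 0 ∨ X ω = 1)
    (hW01 : ∀ ω, W ω = 0 ∨ W ω = 1) (hY01 : ∀ ω, Y ω = 0 ∨ Y ω = 1)
    (hW0 : μ.real {ω | W ω = 0} ≠ 0) (hW1 : μ.real {ω | W ω = 1} ≠ 0)
    (hmarkov : ∀ w : ℝ, (w = 0 ∨ w = 1) →
      μ.real {ω | X ω = 1 ∧ W ω = w ∧ Y ω = 1} =
        μ.real {ω | X ω = 1 ∧ W ω = w} / μ.real {ω | W ω = w} *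
          μ.real {ω | W ω = w ∧ Y ω = 1}) :
    cov[X, Y; μ] = condProbIncrement μ W X * cov[W, Y; μ] := by
  have hXY : μ.real {ω | X ω = 1 ∧ Y ω = 1} =
      μ.real {ω | X ω = 1 ∧ W ω = 0 ∧ Y ω = 1} +
        μ.real {ω | X ω = 1 ∧ W ω = 1 ∧ Y ω = 1} := by
    rw [measureReal_eq_add_of_zero_or_one hW hW01]
    congr 2 <;> ext ω <;> simp only [Set.mem_inter_iff, Set.mem_ofPred_eq] <;> tauto
  have hX1 : μ.real {ω | X ω = 1} =
      μ.real {ω | X ω = 1 ∧ W ω = 0} + μ.real {ω | X ω = 1 ∧ W ω = 1} :=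
    measureReal_eq_add_of_zero_or_one hW hW01 _
  have hY1 : μ.real {ω | Y ω = 1} =
      μ.real {ω | W ω = 0 ∧ Y ω = 1} + μ.real {ω | W ω = 1 ∧ Y ω = 1} := by
    rw [measureReal_eq_add_of_zero_or_one hW hW01, Set.inter_comm, Set.inter_comm {ω | Y ω = 1}]
    rfl
  have hW0' : μ.real {ω | W ω = 0} = 1 - μ.real {ω | W ω = 1} :=
    eq_sub_of_add_eq (measureReal_zero_add_measureReal_one hW hW01)
  rw [covariance_of_zero_or_one hX hY hX01 hY01, covariance_of_zero_or_one hW hY hW01 hY01,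
    condProbIncrement, hXY, hmarkov 0 (.inl rfl), hmarkov 1 (.inr rfl), hX1, hY1, hW0']
  rw [hW0'] at hW0
  field_simp
  ring

end ZeroOne

theorem indirect_corr_second_order_general {Ω : Type*} [MeasurableSpace Ω] (μ : Measure Ω)
    [IsProbabilityMeasure μ] (X W Y : Ω → ℝ)
    (hXm : Measurable X) (hWm : Measurable W) (hYm : Measurable Y)
    (hX01 : ∀ ω, X ω = 0 ∨ X ω = 1) (hW01 : ∀ ω, W ω = 0 ∨ W ω = 1)
    (hY01 : ∀ ω, Y ω = 0 ∨ Y ω = 1)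
    (hposWY : ∀ w y : ℝ, (w = 0 ∨ w = 1) → (y = 0 ∨ y = 1) →
      0 < (μ {ω | W ω = w ∧ Y ω = y}).toReal)
    (hmarkov : ∀ x w y : ℝ, (x = 0 ∨ x = 1) → (w = 0 ∨ w = 1) → (y = 0 ∨ y = 1) →
      (μ {ω | X ω = x ∧ W ω = w ∧ Y ω = y}).toReal /
          (μ {ω | W ω = w ∧ Y ω = y}).toReal =
        (μ {ω | X ω = x ∧ W ω = w}).toReal / (μ {ω | W ω = w}).toReal)
    (px py : ℝ)
    (hpx : px = (μ {ω | X ω = 1}).toReal)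
    (hpy : py = (μ {ω | Y ω = 1}).toReal)
    (δpWX δpYW : ℝ)
    (hδpWX : δpWX = (μ {ω | X ω = 1 ∧ W ω = 1}).toReal / (μ {ω | W ω = 1}).toReal -
      (μ {ω | X ω = 1 ∧ W ω = 0}).toReal / (μ {ω | W ω = 0}).toReal)
    (hδpYW : δpYW = (μ {ω | W ω = 1 ∧ Y ω = 1}).toReal / (μ {ω | Y ω = 1}).toReal -
      (μ {ω | W ω = 1 ∧ Y ω = 0}).toReal / (μ {ω | Y ω = 0}).toReal)
    (δ : ℝ) (hδ1 : |δpWX| ≤ δ) (hδ2 : |δpYW| ≤ δ) :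
    (∫ ω, (X ω - ∫ ω', X ω' ∂μ) * (Y ω - ∫ ω', Y ω' ∂μ) ∂μ) /
        (Real.sqrt (∫ ω, (X ω - ∫ ω', X ω' ∂μ) ^ 2 ∂μ) *
          Real.sqrt (∫ ω, (Y ω - ∫ ω', Y ω' ∂μ) ^ 2 ∂μ)) =
      δpWX * δpYW * Real.sqrt ((py - py ^ 2) / (px - px ^ 2)) ∧
      |(∫ ω, (X ω - ∫ ω', X ω' ∂μ) * (Y ω - ∫ ω', Y ω' ∂μ) ∂μ) /
          (Real.sqrt (∫ ω, (X ω - ∫ ω', X ω' ∂μ) ^ 2 ∂μ) *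
            Real.sqrt (∫ ω, (Y ω - ∫ ω', Y ω' ∂μ) ^ 2 ∂μ))| ≤
        δ ^ 2 * Real.sqrt ((py - py ^ 2) / (px - px ^ 2)) := by
  have hmarg : ∀ w y : ℝ, (w = 0 ∨ w = 1) → (y = 0 ∨ y = 1) →
      μ.real {ω | W ω = w} ≠ 0 ∧ μ.real {ω | Y ω = y} ≠ 0 := fun w y hw hy =>
    ⟨((hposWY w y hw hy).trans_le (measureReal_mono fun _ h => h.1)).ne',
      ((hposWY w y hw hy).trans_le (measureReal_mono fun _ h => h.2)).ne'⟩
  have hcond : ∀ w : ℝ, (w = 0 ∨ w = 1) →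
      μ.real {ω | X ω = 1 ∧ W ω = w ∧ Y ω = 1} =
        μ.real {ω | X ω = 1 ∧ W ω = w} / μ.real {ω | W ω = w} *
          μ.real {ω | W ω = w ∧ Y ω = 1} :=
    fun w hw => (div_eq_iff (hposWY w 1 hw (.inr rfl)).ne').mp
      (hmarkov 1 w 1 (.inr rfl) hw (.inr rfl))
  have hcov : cov[X, Y; μ] = δpWX * δpYW * Var[Y; μ] := by
    rw [covariance_eq_condProbIncrement_mul_covariance_of_markov hXm hWm hYm hX01 hW01 hY01
        (hmarg 0 0 (.inl rfl) (.inl rfl)).1 (hmarg 1 0 (.inr rfl) (.inl rfl)).1 hcond,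
      covariance_eq_condProbIncrement_mul_variance hWm hYm hW01 hY01
        (hmarg 0 0 (.inl rfl) (.inl rfl)).2 (hmarg 0 1 (.inl rfl) (.inr rfl)).2,
      hδpWX, hδpYW, mul_assoc]
    rfl
  have hcorr : cov[X, Y; μ] / (Real.sqrt Var[X; μ] * Real.sqrt Var[Y; μ]) =
      δpWX * δpYW * Real.sqrt ((py - py ^ 2) / (px - px ^ 2)) := by
    rw [hcov, mul_div_assoc, div_sqrt_mul_sqrt_eq_sqrt_div (variance_nonneg Y μ),
      variance_of_zero_or_one hXm hX01, variance_of_zero_or_one hYm hY01, hpx, hpy]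
    rfl
  rw [← covariance, ← variance_eq_integral hXm.aemeasurable,
    ← variance_eq_integral hYm.aemeasurable, hcorr, abs_mul, abs_mul,
    abs_of_nonneg (Real.sqrt_nonneg _)]
  refine ⟨rfl, ?_⟩
  have hδ : 0 ≤ δ := (abs_nonneg _).trans hδ1
  gcongr
  rw [sq]
  exact mul_le_mul hδ1 hδ2 (abs_nonneg _) hδ

/-- for a Markov chain Y → W → X of Bernoulli variables,
C(X,Y) = δp_{W→X} δp_{Y→W} √((p_y − p_y²)/(p_x − p_x²)); in particular, if both
direct increments are bounded by δ then the indirect correlation satisfies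
|C(X,Y)| ≤ δ² √((p_y − p_y²)/(p_x − p_x²)). -/
theorem indirect_corr_second_order {Ω : Type*} [MeasurableSpace Ω] (μ : Measure Ω)
    [IsProbabilityMeasure μ] (X W Y : Ω → ℝ)
    (hXm : Measurable X) (hWm : Measurable W) (hYm : Measurable Y)
    (hX01 : ∀ ω, X ω = 0 ∨ X ω = 1) (hW01 : ∀ ω, W ω = 0 ∨ W ω = 1)
    (hY01 : ∀ ω, Y ω = 0 ∨ Y ω = 1)
    (hposWY : ∀ w y : ℝ, (w = 0 ∨ w = 1) → (y = 0 ∨ y = 1) →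
      0 < (μ {ω | W ω = w ∧ Y ω = y}).toReal)
    (hmarkov : ∀ x w y : ℝ, (x = 0 ∨ x = 1) → (w = 0 ∨ w = 1) → (y = 0 ∨ y = 1) →
      (μ {ω | X ω = x ∧ W ω = w ∧ Y ω = y}).toReal /
          (μ {ω | W ω = w ∧ Y ω = y}).toReal =
        (μ {ω | X ω = x ∧ W ω = w}).toReal / (μ {ω | W ω = w}).toReal)
    (px pw py : ℝ)
    (hpx : px = (μ {ω | X ω = 1}).toReal) (hpw : pw = (μ {ω | W ω = 1}).toReal)
    (hpy : py = (μ {ω | Y ω = 1}).toReal)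
    (hpx0 : 0 < px) (hpx1 : px < 1) (hpw0 : 0 < pw) (hpw1 : pw < 1)
    (hpy0 : 0 < py) (hpy1 : py < 1)
    (δpWX δpYW : ℝ)
    (hδpWX : δpWX = (μ {ω | X ω = 1 ∧ W ω = 1}).toReal / (μ {ω | W ω = 1}).toReal -
      (μ {ω | X ω = 1 ∧ W ω = 0}).toReal / (μ {ω | W ω = 0}).toReal)
    (hδpYW : δpYW = (μ {ω | W ω = 1 ∧ Y ω = 1}).toReal / (μ {ω | Y ω = 1}).toReal -
      (μ {ω | W ω = 1 ∧ Y ω = 0}).toReal / (μ {ω | Y ω = 0}).toReal)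
    (δ : ℝ) (hδ1 : |δpWX| ≤ δ) (hδ2 : |δpYW| ≤ δ) :
    (∫ ω, (X ω - ∫ ω', X ω' ∂μ) * (Y ω - ∫ ω', Y ω' ∂μ) ∂μ) /
        (Real.sqrt (∫ ω, (X ω - ∫ ω', X ω' ∂μ) ^ 2 ∂μ) *
          Real.sqrt (∫ ω, (Y ω - ∫ ω', Y ω' ∂μ) ^ 2 ∂μ)) =
      δpWX * δpYW * Real.sqrt ((py - py ^ 2) / (px - px ^ 2)) ∧
      |(∫ ω, (X ω - ∫ ω', X ω' ∂μ) * (Y ω - ∫ ω', Y ω' ∂μ) ∂μ) /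
          (Real.sqrt (∫ ω, (X ω - ∫ ω', X ω' ∂μ) ^ 2 ∂μ) *
            Real.sqrt (∫ ω, (Y ω - ∫ ω', Y ω' ∂μ) ^ 2 ∂μ))| ≤
        δ ^ 2 * Real.sqrt ((py - py ^ 2) / (px - px ^ 2)) :=
  indirect_corr_second_order_general μ X W Y hXm hWm hYm hX01 hW01 hY01 hposWY hmarkov px py hpx hpy
    δpWX δpYW hδpWX hδpYW δ hδ1 hδ2
end
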